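/- Let ψ : ℝ → ℝ be an even, infinitely differentiable, compactly supported function. Then there exist constants C > 0 and R₀ > 1 such that for all real R ≥ R₀: | ∑_{p prime} ((log p)²/(log R)²)·ψ(2 log p/log R)·(p−1)·(3p² + 3p + 1)/(p³(p+1)³) − ψ(0)/(4(log R)²) + (ψ(0)/(log R)²)·∫_1^∞ E(t)·((−9t⁴ + 10t² + 10t + 3)·log t + 3t⁴ + 3t³ − 2t² − 3t − 1)/(t⁴(t+1)⁴) dt | ≤ C/(log R)⁴. -/

import Mathlib

open Real MeasureTheory

/-- Chebyshev theta function: `θ(t) = ∑_{p ≤ t, p prime} log p`. -/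
noncomputable def chebTheta (t : ℝ) : ℝ :=
  ∑ p ∈ (Finset.range (Nat.floor t + 1)).filter Nat.Prime, Real.log p

/-- Error term in the Prime Number Theorem: `E(t) = θ(t) − t`. -/
noncomputable def chebE (t : ℝ) : ℝ := chebTheta t - t

open Set Filter Topology
open Real MeasureTheory Set Filter Topology

noncomputable def gg (t : ℝ) : ℝ :=
  ((-9*t^4 + 10*t^2 + 10*t + 3) * Real.log t + 3*t^4 + 3*t^3 - 2*t^2 - 3*t - 1)
    / (t^4 * (t+1)^4)

noncomputable def qq (t : ℝ) : ℝ := (3*t^3 - 2*t - 1) / (t^3 * (t+1)^3)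

noncomputable def hh (t : ℝ) : ℝ := Real.log t * qq t

noncomputable def HH (t : ℝ) : ℝ :=
  Real.log t * ((2*t^2)⁻¹ - t⁻¹ + (t+1)⁻¹ - ((t+1)^2)⁻¹) + ((4*t^2)⁻¹ - t⁻¹ + (t+1)⁻¹)

noncomputable def FF (t : ℝ) : ℝ := t * hh t - HH t

lemma qq_eq (t : ℝ) :
    qq t = (t - 1) * (3*t^2 + 3*t + 1) / (t^3 * (t+1)^3) := by
  unfold qq; congr 1; ring

lemma hasDerivAt_hh {t : ℝ} (ht : 0 < t) : HasDerivAt hh (gg t) t := by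
  have ht1 : (0:ℝ) < t + 1 := by linarith
  have h1 : t ≠ 0 := ne_of_gt ht
  have h2 : t + 1 ≠ 0 := ne_of_gt ht1
  have hden : t^3 * (t+1)^3 ≠ 0 := by positivity
  have hnum : HasDerivAt (fun y : ℝ => 3*y^3 - 2*y - 1) (3*(3*t^2) - 2*1) t := by
    have h := (((hasDerivAt_pow 3 t).const_mul 3).sub ((hasDerivAt_id t).const_mul 2)).sub_const 1
    convert h using 1 <;> try rfl
    all_goals (simp only [id_eq]; push_cast; try ring)
  have hd : HasDerivAt (fun y : ℝ => y^3 * (y+1)^3) (3*t^2 * (t+1)^3 + t^3 * (3*(t+1)^2*1)) t := by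
    have hb : HasDerivAt (fun y : ℝ => (y+1)^3) (3*(t+1)^2*1) t := by
      have h := ((hasDerivAt_id t).add_const 1).pow 3
      convert h using 1 <;> try rfl
      all_goals (simp only [id_eq]; push_cast; try ring)
    have h := (hasDerivAt_pow 3 t).mul hb
    convert h using 1 <;> try rfl
    all_goals (simp only [id_eq]; push_cast; try ring)
  have hq := hnum.div hd hden
  have h := (Real.hasDerivAt_log h1).mul hq
  convert h using 1 <;> try rfl
  unfold gg
  simp only [Pi.div_apply, Pi.mul_apply, Pi.add_apply, Pi.sub_apply]
  field_simp
  ring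

lemma hasDerivAt_HH {t : ℝ} (ht : 0 < t) : HasDerivAt HH (hh t) t := by
  have ht1 : (0:ℝ) < t + 1 := by linarith
  have h1 : t ≠ 0 := ne_of_gt ht
  have h2 : t + 1 ≠ 0 := ne_of_gt ht1
  have e1 : HasDerivAt (fun y : ℝ => (2*y^2)⁻¹) (-(2*(2*t^1)) / (2*t^2)^2) t := by
    have h := ((hasDerivAt_pow 2 t).const_mul 2).inv (by positivity)
    convert h using 1 <;> try rfl
    all_goals (simp only [id_eq]; push_cast; try ring)
  have e2 : HasDerivAt (fun y : ℝ => y⁻¹) (-(t^2)⁻¹) t := hasDerivAt_inv h1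
  have e3 : HasDerivAt (fun y : ℝ => (y+1)⁻¹) (-1/(t+1)^2) t := by
    have h := ((hasDerivAt_id t).add_const 1).inv h2
    convert h using 1 <;> try rfl
    all_goals (simp only [id_eq]; push_cast; try ring)
  have e4 : HasDerivAt (fun y : ℝ => ((y+1)^2)⁻¹) (-(2*(t+1)*1) / ((t+1)^2)^2) t := by
    have hb : HasDerivAt (fun y : ℝ => (y+1)^2) (2*(t+1)*1) t := by
      have h := ((hasDerivAt_id t).add_const 1).pow 2
      convert h using 1 <;> try rfl
      all_goals (simp only [id_eq]; push_cast; try ring)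
    exact hb.inv (by positivity)
  have e5 : HasDerivAt (fun y : ℝ => (4*y^2)⁻¹) (-(4*(2*t^1)) / (4*t^2)^2) t := by
    have h := ((hasDerivAt_pow 2 t).const_mul 4).inv (by positivity)
    convert h using 1 <;> try rfl
    all_goals (simp only [id_eq]; push_cast; try ring)
  have hP := ((e1.sub e2).add e3).sub e4
  have hQ := (e5.sub e2).add e3
  have h := ((Real.hasDerivAt_log h1).mul hP).add hQ
  convert h using 1 <;> try rfl
  unfold hh qq
  simp only [Pi.div_apply, Pi.mul_apply, Pi.add_apply, Pi.sub_apply]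
  field_simp
  ring

lemma hasDerivAt_FF {t : ℝ} (ht : 0 < t) : HasDerivAt FF (t * gg t) t := by
  have h := ((hasDerivAt_id t).mul (hasDerivAt_hh ht)).sub (hasDerivAt_HH ht)
  convert h using 1 <;> try rfl
  all_goals (simp [hh]; try ring)

lemma pow_chain {t : ℝ} (ht : 1 ≤ t) :
    t ≤ t^2 ∧ t^2 ≤ t^3 ∧ t^3 ≤ t^4 ∧ t^4 ≤ t^5 := by
  have h0 : 0 < t := lt_of_lt_of_le one_pos ht
  refine ⟨?_, ?_, ?_, ?_⟩ <;> nlinarith [pow_pos h0 2, pow_pos h0 3, pow_pos h0 4]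

lemma abs_gg_le {t : ℝ} (ht : 1 ≤ t) : |gg t| ≤ 44 / t^3 := by
  have h0 : 0 < t := lt_of_lt_of_le one_pos ht
  obtain ⟨a1, a2, a3, a4⟩ := pow_chain ht
  have hl0 : 0 ≤ Real.log t := Real.log_nonneg ht
  have hl1 : Real.log t ≤ t := by
    have := Real.log_le_sub_one_of_pos h0; linarith
  have hden : (0:ℝ) < t^4 * (t+1)^4 := by positivity
  have hD : t^8 ≤ t^4 * (t+1)^4 := by
    nlinarith [pow_le_pow_left₀ (le_of_lt h0) (by linarith : t ≤ t+1) 4, pow_pos h0 4]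
  have hA : 0 ≤ Real.log t * (41*t^4 - 10*t^2 - 10*t - 3) :=
    mul_nonneg hl0 (by nlinarith)
  have hA' : 0 ≤ Real.log t * (23*t^4 + 10*t^2 + 10*t + 3) :=
    mul_nonneg hl0 (by positivity)
  have hB : Real.log t * t^4 ≤ t * t^4 := mul_le_mul_of_nonneg_right hl1 (by positivity)
  have hnum : |(-9*t^4 + 10*t^2 + 10*t + 3) * Real.log t + 3*t^4 + 3*t^3 - 2*t^2 - 3*t - 1|
      ≤ 44 * t^5 := by
    rw [abs_le]
    constructor <;> nlinarith
  calc |gg t| = |(-9*t^4 + 10*t^2 + 10*t + 3) * Real.log t + 3*t^4 + 3*t^3 - 2*t^2 - 3*t - 1|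
        / (t^4 * (t+1)^4) := by rw [gg, abs_div, abs_of_pos hden]
    _ ≤ (44 * t^5) / t^8 := div_le_div₀ (by positivity) hnum (by positivity) hD
    _ = 44 / t^3 := by
        rw [div_eq_div_iff (by positivity) (by positivity)]; ring

lemma abs_qq_le {t : ℝ} (ht : 1 ≤ t) : |qq t| ≤ 6 / t^3 := by
  have h0 : 0 < t := lt_of_lt_of_le one_pos ht
  obtain ⟨a1, a2, a3, a4⟩ := pow_chain ht
  have hden : (0:ℝ) < t^3 * (t+1)^3 := by positivity
  have hD : t^6 ≤ t^3 * (t+1)^3 := by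
    nlinarith [pow_le_pow_left₀ (le_of_lt h0) (by linarith : t ≤ t+1) 3, pow_pos h0 3]
  have hnum : |3*t^3 - 2*t - 1| ≤ 6 * t^3 := by
    rw [abs_le]; constructor <;> nlinarith
  calc |qq t| = |3*t^3 - 2*t - 1| / (t^3 * (t+1)^3) := by rw [qq, abs_div, abs_of_pos hden]
    _ ≤ (6 * t^3) / t^6 := div_le_div₀ (by positivity) hnum (by positivity) hD
    _ = 6 / t^3 := by rw [div_eq_div_iff (by positivity) (by positivity)]; ring

lemma abs_hh_le {t : ℝ} (ht : 1 ≤ t) : |hh t| ≤ 6 * (Real.log t + 1) / t := by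
  have h0 : 0 < t := lt_of_lt_of_le one_pos ht
  obtain ⟨a1, a2, a3, a4⟩ := pow_chain ht
  have hl0 : 0 ≤ Real.log t := Real.log_nonneg ht
  have h1 : |hh t| = Real.log t * |qq t| := by
    rw [hh, abs_mul, abs_of_nonneg hl0]
  rw [h1]
  have h2 : Real.log t * |qq t| ≤ Real.log t * (6 / t^3) :=
    mul_le_mul_of_nonneg_left (abs_qq_le ht) hl0
  have h3 : Real.log t * (6 / t^3) ≤ 6 * (Real.log t + 1) / t := by
    rw [mul_div_assoc'] at *
    rw [div_le_div_iff₀ (by positivity) h0]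
    have hx : Real.log t * t ≤ Real.log t * t^3 := mul_le_mul_of_nonneg_left (by linarith) hl0
    nlinarith [pow_pos h0 3]
  linarith

lemma abs_id_hh_le {t : ℝ} (ht : 1 ≤ t) : |t * hh t| ≤ 6 * (Real.log t + 1) / t := by
  have h0 : 0 < t := lt_of_lt_of_le one_pos ht
  obtain ⟨a1, a2, a3, a4⟩ := pow_chain ht
  have hl0 : 0 ≤ Real.log t := Real.log_nonneg ht
  have h1 : |t * hh t| = t * (Real.log t * |qq t|) := by
    rw [hh, abs_mul, abs_mul, abs_of_nonneg hl0, abs_of_pos h0]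
  rw [h1]
  have h2 : t * (Real.log t * |qq t|) ≤ t * (Real.log t * (6 / t^3)) := by
    apply mul_le_mul_of_nonneg_left _ (le_of_lt h0)
    exact mul_le_mul_of_nonneg_left (abs_qq_le ht) hl0
  have he : t * (Real.log t * (6 / t^3)) = 6 * Real.log t / t^2 := by
    field_simp
  have h3 : 6 * Real.log t / t^2 ≤ 6 * (Real.log t + 1) / t := by
    rw [div_le_div_iff₀ (by positivity) h0]
    have hx : Real.log t * t ≤ Real.log t * t^2 := mul_le_mul_of_nonneg_left a1 hl0
    nlinarith [pow_pos h0 2]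
  rw [he] at h2
  linarith

lemma abs_HH_le {t : ℝ} (ht : 1 ≤ t) : |HH t| ≤ 4 * (Real.log t + 1) / t := by
  have h0 : 0 < t := lt_of_lt_of_le one_pos ht
  have h1 : (0:ℝ) < t + 1 := by linarith
  have hl0 : 0 ≤ Real.log t := Real.log_nonneg ht
  have i1 : (0:ℝ) < (2*t^2)⁻¹ := by positivity
  have i1' : (2*t^2)⁻¹ ≤ t⁻¹ := inv_anti₀ h0 (by nlinarith)
  have i2 : (0:ℝ) < t⁻¹ := by positivity
  have i3 : (0:ℝ) < (t+1)⁻¹ := by positivity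
  have i3' : (t+1)⁻¹ ≤ t⁻¹ := inv_anti₀ h0 (by linarith)
  have i4 : (0:ℝ) < ((t+1)^2)⁻¹ := by positivity
  have i4' : ((t+1)^2)⁻¹ ≤ t⁻¹ := inv_anti₀ h0 (by nlinarith)
  have i5 : (0:ℝ) < (4*t^2)⁻¹ := by positivity
  have i5' : (4*t^2)⁻¹ ≤ t⁻¹ := inv_anti₀ h0 (by nlinarith)
  have hP : |(2*t^2)⁻¹ - t⁻¹ + (t+1)⁻¹ - ((t+1)^2)⁻¹| ≤ 2 * t⁻¹ := by
    rw [abs_le]; constructor <;> linarith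
  have hQ : |(4*t^2)⁻¹ - t⁻¹ + (t+1)⁻¹| ≤ 2 * t⁻¹ := by
    rw [abs_le]; constructor <;> linarith
  have : |HH t| ≤ Real.log t * (2 * t⁻¹) + 2 * t⁻¹ := by
    rw [HH]
    calc |Real.log t * ((2*t^2)⁻¹ - t⁻¹ + (t+1)⁻¹ - ((t+1)^2)⁻¹) + ((4*t^2)⁻¹ - t⁻¹ + (t+1)⁻¹)|
        ≤ |Real.log t * ((2*t^2)⁻¹ - t⁻¹ + (t+1)⁻¹ - ((t+1)^2)⁻¹)| + |(4*t^2)⁻¹ - t⁻¹ + (t+1)⁻¹| :=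
          abs_add_le _ _
      _ ≤ Real.log t * (2 * t⁻¹) + 2 * t⁻¹ := by
          rw [abs_mul, abs_of_nonneg hl0]
          exact add_le_add (mul_le_mul_of_nonneg_left hP hl0) hQ
  have he : Real.log t * (2 * t⁻¹) + 2 * t⁻¹ ≤ 4 * (Real.log t + 1) / t := by
    rw [div_eq_mul_inv]
    have := mul_nonneg hl0 (le_of_lt i2)
    nlinarith
  linarith

lemma abs_FF_le {t : ℝ} (ht : 1 ≤ t) : |FF t| ≤ 10 * (Real.log t + 1) / t := by
  have h1 := abs_id_hh_le ht
  have h2 := abs_HH_le ht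
  have h3 : |FF t| ≤ |t * hh t| + |HH t| := abs_sub _ _
  have : 6 * (Real.log t + 1) / t + 4 * (Real.log t + 1) / t = 10 * (Real.log t + 1) / t := by
    ring
  linarith

lemma tendsto_aux {f : ℝ → ℝ} (c : ℝ) (h : ∀ t : ℝ, 1 ≤ t → |f t| ≤ c * (Real.log t + 1) / t) :
    Tendsto f atTop (𝓝 0) := by
  have h1 : Tendsto (fun t : ℝ => Real.log t / t) atTop (𝓝 0) :=
    Real.isLittleO_log_id_atTop.tendsto_div_nhds_zero
  have h2 : Tendsto (fun t : ℝ => t⁻¹) atTop (𝓝 0) := tendsto_inv_atTop_zero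
  have h3 : Tendsto (fun t : ℝ => c * (Real.log t / t + t⁻¹)) atTop (𝓝 (c * (0 + 0))) :=
    ((h1.add h2).const_mul c)
  rw [show c * ((0:ℝ) + 0) = 0 by ring] at h3
  apply squeeze_zero_norm' _ (h3.congr (fun t => by rw [inv_eq_one_div]))
  filter_upwards [eventually_ge_atTop (1:ℝ)] with t ht
  calc ‖f t‖ ≤ c * (Real.log t + 1) / t := h t ht
    _ = c * (Real.log t / t + 1 / t) := by ring
section part3
open Real MeasureTheory Set Filter Topology

lemma tendsto_hh_zero : Tendsto hh atTop (𝓝 0) := tendsto_aux 6 (fun t ht => abs_hh_le ht)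

lemma tendsto_FF_zero : Tendsto FF atTop (𝓝 0) := tendsto_aux 10 (fun t ht => abs_FF_le ht)

lemma rpow_neg_nat {t : ℝ} (ht : 0 < t) (n : ℕ) : t ^ (-(n:ℝ)) = (t^n)⁻¹ := by
  rw [Real.rpow_neg (le_of_lt ht), Real.rpow_natCast]

lemma contOn_gg : ContinuousOn gg (Ioi 0) := by
  have hlog : ContinuousOn Real.log (Ioi (0:ℝ)) :=
    Real.continuousOn_log.mono (fun x hx => by
      simp only [Set.mem_compl_iff, Set.mem_singleton_iff]
      exact ne_of_gt hx)
  have h : ContinuousOn (fun t : ℝ =>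
      ((-9*t^4 + 10*t^2 + 10*t + 3) * Real.log t + (3*t^4 + 3*t^3 - 2*t^2 - 3*t - 1))
        / (t^4 * (t+1)^4)) (Ioi 0) := by
    apply ContinuousOn.div
    · exact (((by continuity : Continuous fun t : ℝ => -9*t^4 + 10*t^2 + 10*t + 3).continuousOn.mul
        hlog).add (by continuity : Continuous fun t : ℝ => 3*t^4 + 3*t^3 - 2*t^2 - 3*t - 1).continuousOn)
    · exact (by continuity : Continuous fun t : ℝ => t^4 * (t+1)^4).continuousOn
    · intro t ht
      have : (0:ℝ) < t := ht
      positivity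
  exact h.congr (fun t ht => by rw [gg]; ring_nf)

lemma integrableOn_gg {a : ℝ} (ha : 1 ≤ a) : IntegrableOn gg (Ioi a) := by
  have h0 : (0:ℝ) < a := lt_of_lt_of_le one_pos ha
  apply Integrable.mono' (g := fun t : ℝ => 44 * t ^ (-(3:ℕ):ℝ))
    ((integrableOn_Ioi_rpow_of_lt (by norm_num) h0).const_mul 44)
  · exact ((contOn_gg.mono (fun x hx => lt_trans h0 hx)).aestronglyMeasurable measurableSet_Ioi)
  · filter_upwards [ae_restrict_mem measurableSet_Ioi] with t ht
    have h1 : 1 ≤ t := le_trans ha (le_of_lt ht)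
    have h2 : 0 < t := lt_of_lt_of_le one_pos h1
    calc ‖gg t‖ ≤ 44 / t^3 := abs_gg_le h1
      _ = 44 * t ^ (-(3:ℕ):ℝ) := by rw [rpow_neg_nat h2, div_eq_mul_inv]

lemma integrableOn_id_gg : IntegrableOn (fun t => t * gg t) (Ioi 1) := by
  apply Integrable.mono' (g := fun t : ℝ => 44 * t ^ (-(2:ℕ):ℝ))
    ((integrableOn_Ioi_rpow_of_lt (by norm_num) one_pos).const_mul 44)
  · exact (continuousOn_id.mul (contOn_gg.mono (fun x (hx : x ∈ Ioi (1:ℝ)) => mem_Ioi.mpr (lt_trans one_pos (mem_Ioi.mp hx))))).aestronglyMeasurable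
      measurableSet_Ioi
  · filter_upwards [ae_restrict_mem measurableSet_Ioi] with t ht
    have h1 : 1 ≤ t := le_of_lt ht
    have h2 : 0 < t := lt_of_lt_of_le one_pos h1
    have : ‖t * gg t‖ = t * |gg t| := by rw [norm_mul, Real.norm_eq_abs, Real.norm_eq_abs, abs_of_pos h2]
    rw [this, rpow_neg_nat h2]
    calc t * |gg t| ≤ t * (44 / t^3) := mul_le_mul_of_nonneg_left (abs_gg_le h1) (le_of_lt h2)
      _ = 44 * (t^2)⁻¹ := by field_simp

lemma integral_Ioi_gg {a : ℝ} (ha : 1 ≤ a) : ∫ t in Ioi a, gg t = - hh a := by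
  have h := integral_Ioi_of_hasDerivAt_of_tendsto' (a := a) (f := hh) (f' := gg) (m := 0)
    (fun x hx => hasDerivAt_hh (lt_of_lt_of_le one_pos (le_trans ha hx)))
    (integrableOn_gg ha) tendsto_hh_zero
  rw [h]; ring

lemma integral_Ioi_id_gg : ∫ t in Ioi (1:ℝ), t * gg t = -(1/4) := by
  have h := integral_Ioi_of_hasDerivAt_of_tendsto' (a := 1) (f := FF) (f' := fun t => t * gg t) (m := 0)
    (fun x hx => hasDerivAt_FF (lt_of_lt_of_le one_pos hx))
    integrableOn_id_gg tendsto_FF_zero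
  rw [h]
  have : FF 1 = 1/4 := by
    rw [FF, hh, qq, HH]
    norm_num
  rw [this]; ring

end part3
section part4
open Real MeasureTheory Set Filter Topology

lemma chebTheta_nonneg (t : ℝ) : 0 ≤ chebTheta t := by
  apply Finset.sum_nonneg
  intro p hp
  rw [Finset.mem_filter] at hp
  exact Real.log_nonneg (by exact_mod_cast hp.2.one_lt.le)

lemma monotone_chebTheta : Monotone chebTheta := by
  intro s t hst
  apply Finset.sum_le_sum_of_subset_of_nonneg
  · apply Finset.filter_subset_filter
    apply Finset.range_subset_range.mpr
    exact Nat.succ_le_succ (Nat.floor_mono hst)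
  · intro p hp _
    rw [Finset.mem_filter] at hp
    exact Real.log_nonneg (by exact_mod_cast hp.2.one_lt.le)

lemma measurable_chebTheta : Measurable chebTheta := monotone_chebTheta.measurable

lemma chebTheta_le {t : ℝ} (ht : 0 ≤ t) : chebTheta t ≤ 2 * t := by
  have h1 : chebTheta t = Real.log ((primorial (Nat.floor t) : ℕ) : ℝ) := by
    rw [chebTheta, primorial]
    rw [Nat.cast_prod, Real.log_prod]
    intro p hp
    rw [Finset.mem_filter] at hp
    exact_mod_cast hp.2.pos.ne'
  rw [h1]
  have h2 : ((primorial (Nat.floor t) : ℕ) : ℝ) ≤ (4:ℝ) ^ (Nat.floor t) := by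
    exact_mod_cast primorial_le_4_pow (Nat.floor t)
  have h3 : Real.log ((primorial (Nat.floor t) : ℕ) : ℝ) ≤ Real.log ((4:ℝ) ^ (Nat.floor t)) :=
    Real.log_le_log (by exact_mod_cast primorial_pos (Nat.floor t)) h2
  have h4 : Real.log ((4:ℝ) ^ (Nat.floor t)) = (Nat.floor t : ℝ) * Real.log 4 :=
    Real.log_pow _ _
  have h5 : (Nat.floor t : ℝ) ≤ t := Nat.floor_le ht
  have h6 : Real.log 4 ≤ 2 := by
    rw [show (4:ℝ) = 2^2 by norm_num, Real.log_pow]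
    have := Real.log_two_lt_d9
    push_cast
    nlinarith
  calc Real.log ((primorial (Nat.floor t) : ℕ) : ℝ) ≤ (Nat.floor t : ℝ) * Real.log 4 := by
        rw [← h4]; exact h3
    _ ≤ t * 2 := by
        apply mul_le_mul h5 h6 (Real.log_nonneg (by norm_num)) ht
    _ = 2 * t := by ring

lemma integrableOn_theta_gg : IntegrableOn (fun t => chebTheta t * gg t) (Ioi 1) := by
  apply Integrable.mono' (g := fun t : ℝ => 88 * t ^ (-(2:ℕ):ℝ))
    ((integrableOn_Ioi_rpow_of_lt (by norm_num) one_pos).const_mul 88)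
  · exact (measurable_chebTheta.aestronglyMeasurable.mul
      ((contOn_gg.mono (fun x (hx : x ∈ Ioi (1:ℝ)) => mem_Ioi.mpr (lt_trans one_pos (mem_Ioi.mp hx)))).aestronglyMeasurable measurableSet_Ioi))
  · filter_upwards [ae_restrict_mem measurableSet_Ioi] with t ht
    have h1 : 1 ≤ t := le_of_lt ht
    have h2 : 0 < t := lt_of_lt_of_le one_pos h1
    rw [rpow_neg_nat h2]
    have e1 : ‖chebTheta t * gg t‖ = chebTheta t * |gg t| := by
      rw [norm_mul, Real.norm_eq_abs, Real.norm_eq_abs, abs_of_nonneg (chebTheta_nonneg t)]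
    rw [e1]
    calc chebTheta t * |gg t| ≤ (2*t) * (44 / t^3) := by
          apply mul_le_mul (chebTheta_le (by linarith)) (abs_gg_le h1) (abs_nonneg _) (by linarith)
      _ = 88 * (t^2)⁻¹ := by field_simp; ring

lemma integrableOn_chebE_gg : IntegrableOn (fun t => chebE t * gg t) (Ioi 1) := by
  have : (fun t => chebE t * gg t) = fun t => chebTheta t * gg t - t * gg t := by
    funext t; rw [chebE]; ring
  rw [this]
  exact integrableOn_theta_gg.sub integrableOn_id_gg

end part4
section part5
open Real MeasureTheory Set Filter Topology

noncomputable def uu (p : ℕ) (t : ℝ) : ℝ :=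
  if p.Prime then (Ici (p:ℝ)).indicator (fun s => Real.log p * gg s) t else 0

noncomputable def aa (p : ℕ) : ℝ := if p.Prime then Real.log p * hh p else 0

lemma log_le_rpow_div {x r : ℝ} (hx : 1 ≤ x) (hr : 0 < r) : Real.log x ≤ x ^ r / r := by
  have h0 : (0:ℝ) < x := lt_of_lt_of_le one_pos hx
  have h1 : Real.log (x ^ r) = r * Real.log x := Real.log_rpow h0 r
  have h2 : Real.log (x ^ r) ≤ x ^ r := by
    have := Real.log_le_sub_one_of_pos (Real.rpow_pos_of_pos h0 r)
    linarith
  rw [h1] at h2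
  rw [le_div_iff₀ hr]
  linarith [h2]

lemma log_le_two_sqrt {x : ℝ} (hx : 1 ≤ x) : Real.log x ≤ 2 * x ^ ((1:ℝ)/2) := by
  have := log_le_rpow_div hx (by norm_num : (0:ℝ) < 1/2)
  calc Real.log x ≤ x ^ ((1:ℝ)/2) / (1/2) := this
    _ = 2 * x ^ ((1:ℝ)/2) := by ring

lemma rpow_half_sq {x : ℝ} (hx : 0 ≤ x) : (x ^ ((1:ℝ)/2))^2 = x := by
  rw [← Real.rpow_natCast (x ^ ((1:ℝ)/2)) 2, ← Real.rpow_mul hx]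
  norm_num

lemma rpow_eighth_pow4 {x : ℝ} (hx : 0 ≤ x) : (x ^ ((1:ℝ)/8))^4 = x ^ ((1:ℝ)/2) := by
  rw [← Real.rpow_natCast (x ^ ((1:ℝ)/8)) 4, ← Real.rpow_mul hx]
  norm_num

lemma sq_log_le {x : ℝ} (hx : 1 ≤ x) : (Real.log x)^2 ≤ 4 * x := by
  have h0 : (0:ℝ) ≤ x := by linarith
  have h1 := log_le_two_sqrt hx
  have h2 : (Real.log x)^2 ≤ (2 * x ^ ((1:ℝ)/2))^2 :=
    pow_le_pow_left₀ (Real.log_nonneg hx) h1 2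
  calc (Real.log x)^2 ≤ (2 * x ^ ((1:ℝ)/2))^2 := h2
    _ = 4 * (x ^ ((1:ℝ)/2))^2 := by ring
    _ = 4 * x := by rw [rpow_half_sq h0]

lemma pow4_log_le {x : ℝ} (hx : 1 ≤ x) : (Real.log x)^4 ≤ 4096 * x ^ ((1:ℝ)/2) := by
  have h0 : (0:ℝ) ≤ x := by linarith
  have h1 : Real.log x ≤ 8 * x ^ ((1:ℝ)/8) := by
    have := log_le_rpow_div hx (by norm_num : (0:ℝ) < 1/8)
    calc Real.log x ≤ x ^ ((1:ℝ)/8) / (1/8) := this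
      _ = 8 * x ^ ((1:ℝ)/8) := by ring
  have h2 : (Real.log x)^4 ≤ (8 * x ^ ((1:ℝ)/8))^4 :=
    pow_le_pow_left₀ (Real.log_nonneg hx) h1 4
  calc (Real.log x)^4 ≤ (8 * x ^ ((1:ℝ)/8))^4 := h2
    _ = 4096 * (x ^ ((1:ℝ)/8))^4 := by ring
    _ = 4096 * x ^ ((1:ℝ)/2) := by rw [rpow_eighth_pow4 h0]

lemma rpow_three_half_le {x : ℝ} (hx : 1 ≤ x) : x ^ ((3:ℝ)/2) ≤ x^2 := by
  have h := Real.rpow_le_rpow_of_exponent_le hx (by norm_num : (3:ℝ)/2 ≤ 2)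
  rwa [show ((2:ℝ)) = ((2:ℕ):ℝ) by norm_num, Real.rpow_natCast] at h

lemma rpow_half_mul_three_half {x : ℝ} (hx : 0 ≤ x) :
    x ^ ((1:ℝ)/2) * x ^ ((3:ℝ)/2) = x^2 := by
  rcases eq_or_lt_of_le hx with h|h
  · rw [← h]
    rw [Real.zero_rpow (by norm_num), Real.zero_rpow (by norm_num)]
    norm_num
  · rw [← Real.rpow_add h, show (1:ℝ)/2 + 3/2 = ((2:ℕ):ℝ) by norm_num, Real.rpow_natCast]

lemma keybound1 {x : ℝ} (hx : 1 ≤ x) : Real.log x * (22 / x^2) ≤ 44 * (x ^ ((3:ℝ)/2))⁻¹ := by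
  have h0 : (0:ℝ) < x := lt_of_lt_of_le one_pos hx
  have hr : (0:ℝ) < x ^ ((3:ℝ)/2) := Real.rpow_pos_of_pos h0 _
  have h1 := log_le_two_sqrt hx
  have h2 : Real.log x * (22 / x^2) ≤ (2 * x ^ ((1:ℝ)/2)) * (22 / x^2) :=
    mul_le_mul_of_nonneg_right h1 (by positivity)
  have h3 : (2 * x ^ ((1:ℝ)/2)) * (22 / x^2) = 44 * (x ^ ((1:ℝ)/2) / x^2) := by ring
  have h4 : x ^ ((1:ℝ)/2) / x^2 = (x ^ ((3:ℝ)/2))⁻¹ := by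
    rw [div_eq_iff (by positivity : (x:ℝ)^2 ≠ 0), inv_mul_eq_div,
      eq_div_iff (by positivity : x ^ ((3:ℝ)/2) ≠ 0)]
    rw [rpow_half_mul_three_half (le_of_lt h0)]
  rw [h3, h4] at h2
  linarith

lemma keybound2 {x : ℝ} (hx : 1 ≤ x) :
    (Real.log x)^2 * (6 / x^3) ≤ 24 * (x ^ ((3:ℝ)/2))⁻¹ := by
  have h0 : (0:ℝ) < x := lt_of_lt_of_le one_pos hx
  have hr : (0:ℝ) < x ^ ((3:ℝ)/2) := Real.rpow_pos_of_pos h0 _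
  have h2 : (Real.log x)^2 * (6 / x^3) ≤ (4*x) * (6 / x^3) :=
    mul_le_mul_of_nonneg_right (sq_log_le hx) (by positivity)
  have h3 : (4*x) * (6/x^3) = 24 * (x^2)⁻¹ := by field_simp; ring
  have h4 : (x^2)⁻¹ ≤ (x ^ ((3:ℝ)/2))⁻¹ :=
    inv_anti₀ hr (rpow_three_half_le hx)
  rw [h3] at h2
  linarith
section part5b
open Real MeasureTheory Set Filter Topology

lemma keybound4 {x : ℝ} (hx : 1 ≤ x) :
    (Real.log x)^4 * (6 / x^3) ≤ 24576 * (x ^ ((3:ℝ)/2))⁻¹ := by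
  have h0 : (0:ℝ) < x := lt_of_lt_of_le one_pos hx
  have hr : (0:ℝ) < x ^ ((3:ℝ)/2) := Real.rpow_pos_of_pos h0 _
  have h2 : (Real.log x)^4 * (6 / x^3) ≤ (4096 * x ^ ((1:ℝ)/2)) * (6 / x^3) :=
    mul_le_mul_of_nonneg_right (pow4_log_le hx) (by positivity)
  have h3 : (4096 * x ^ ((1:ℝ)/2)) * (6 / x^3) = 24576 * (x ^ ((1:ℝ)/2) / x^3) := by ring
  have h4 : x ^ ((1:ℝ)/2) / x^3 ≤ (x ^ ((3:ℝ)/2))⁻¹ := by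
    rw [div_le_iff₀ (by positivity), inv_mul_eq_div, le_div_iff₀ hr,
      rpow_half_mul_three_half (le_of_lt h0)]
    exact (pow_chain hx).2.1
  rw [h3] at h2
  have : 24576 * (x ^ ((1:ℝ)/2) / x^3) ≤ 24576 * (x ^ ((3:ℝ)/2))⁻¹ := by linarith
  linarith

lemma summable_prime_bound {b : ℕ → ℝ} {c : ℝ}
    (h0 : ∀ p, ¬ p.Prime → b p = 0)
    (h : ∀ p : ℕ, p.Prime → |b p| ≤ c * (((p:ℝ)) ^ ((3:ℝ)/2))⁻¹) : Summable b := by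
  have hc : 0 ≤ c := by
    by_contra hneg
    push_neg at hneg
    have hi : (0:ℝ) < ((((2:ℕ):ℝ)) ^ ((3:ℝ)/2))⁻¹ := by positivity
    have h2 := h 2 Nat.prime_two
    nlinarith [abs_nonneg (b 2), mul_neg_of_neg_of_pos hneg hi]
  apply Summable.of_norm
  have hmaj : Summable (fun p : ℕ => c * (((p:ℝ)) ^ ((3:ℝ)/2))⁻¹) :=
    (Real.summable_nat_rpow_inv.mpr (by norm_num)).mul_left c
  apply Summable.of_nonneg_of_le (fun p => norm_nonneg _) _ hmaj
  intro p
  by_cases hp : p.Prime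
  · exact h p hp
  · rw [h0 p hp]
    simp only [norm_zero]
    positivity

lemma integral_abs_gg_le {a : ℝ} (ha : 1 ≤ a) : ∫ t in Ioi a, |gg t| ≤ 22 / a^2 := by
  have h0 : (0:ℝ) < a := lt_of_lt_of_le one_pos ha
  have hint : IntegrableOn (fun t : ℝ => 44 * t ^ (-(3:ℕ):ℝ)) (Ioi a) :=
    (integrableOn_Ioi_rpow_of_lt (by norm_num) h0).const_mul 44
  have h1 : ∫ t in Ioi a, |gg t| ≤ ∫ t in Ioi a, 44 * t ^ (-(3:ℕ):ℝ) := by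
    apply setIntegral_mono_on (integrableOn_gg ha).abs hint measurableSet_Ioi
    intro t ht
    have h2 : 1 ≤ t := le_trans ha (le_of_lt ht)
    have h3 : 0 < t := lt_of_lt_of_le one_pos h2
    rw [rpow_neg_nat h3]
    calc |gg t| ≤ 44 / t^3 := abs_gg_le h2
      _ = 44 * (t^3)⁻¹ := by rw [div_eq_mul_inv]
  have h2 : ∫ t in Ioi a, 44 * t ^ (-(3:ℕ):ℝ) = 44 * ∫ t in Ioi a, t ^ (-(3:ℕ):ℝ) :=
    integral_const_mul _ _
  have h3 : ∫ t in Ioi a, t ^ (-(3:ℕ):ℝ) = -a ^ ((-(3:ℕ):ℝ) + 1) / ((-(3:ℕ):ℝ) + 1) :=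
    integral_Ioi_rpow_of_lt (by norm_num) h0
  have h4 : a ^ ((-(3:ℕ):ℝ) + 1) = (a^2)⁻¹ := by
    rw [show ((-(3:ℕ):ℝ) + 1) = (-(2:ℕ):ℝ) by push_cast; norm_num]
    exact rpow_neg_nat h0 2
  rw [h2, h3, h4] at h1
  calc ∫ t in Ioi a, |gg t| ≤ 44 * (-(a^2)⁻¹ / ((-(3:ℕ):ℝ) + 1)) := h1
    _ = 22 / a^2 := by push_cast; field_simp; ring

lemma uu_integrable (p : ℕ) : Integrable (uu p) (volume.restrict (Ioi (1:ℝ))) := by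
  by_cases hp : p.Prime
  · have h1 : IntegrableOn (fun s => Real.log p * gg s) (Ioi (1:ℝ)) :=
      (integrableOn_gg le_rfl).const_mul _
    have := h1.indicator (measurableSet_Ici (a := (p:ℝ)))
    apply this.congr
    filter_upwards with t
    simp [uu, hp]
  · apply (integrable_zero _ _ _).congr
    filter_upwards with t
    simp [uu, hp]

lemma prime_one_le {p : ℕ} (hp : p.Prime) : (1:ℝ) ≤ (p:ℝ) := by
  exact_mod_cast hp.one_lt.le

lemma prime_two_le {p : ℕ} (hp : p.Prime) : (2:ℝ) ≤ (p:ℝ) := by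
  exact_mod_cast hp.two_le

lemma uu_integral {p : ℕ} (hp : p.Prime) :
    ∫ t in Ioi (1:ℝ), uu p t = -(Real.log p * hh p) := by
  have hp1 : (1:ℝ) ≤ (p:ℝ) := prime_one_le hp
  have hp2 : (2:ℝ) ≤ (p:ℝ) := prime_two_le hp
  have e0 : ∀ t : ℝ, uu p t = (Ici (p:ℝ)).indicator (fun s => Real.log p * gg s) t := by
    intro t; simp [uu, hp]
  simp only [e0]
  rw [integral_indicator measurableSet_Ici, Measure.restrict_restrict measurableSet_Ici]
  have e1 : Ici (p:ℝ) ∩ Ioi 1 = Ici (p:ℝ) := by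
    apply inter_eq_left.mpr
    intro x hx
    have : (p:ℝ) ≤ x := hx
    exact mem_Ioi.mpr (by linarith)
  rw [e1, integral_Ici_eq_integral_Ioi, integral_const_mul, integral_Ioi_gg hp1]
  ring

end part5b
section part6
open Real MeasureTheory Set Filter Topology

lemma uu_norm_integral_le {p : ℕ} (hp : p.Prime) :
    ∫ t in Ioi (1:ℝ), ‖uu p t‖ ≤ Real.log p * (22 / (p:ℝ)^2) := by
  have hp1 : (1:ℝ) ≤ (p:ℝ) := prime_one_le hp
  have hl0 : 0 ≤ Real.log p := Real.log_nonneg hp1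
  have e0 : ∀ t : ℝ, ‖uu p t‖ = (Ici (p:ℝ)).indicator (fun s => Real.log p * |gg s|) t := by
    intro t
    have : uu p t = (Ici (p:ℝ)).indicator (fun s => Real.log p * gg s) t := by simp [uu, hp]
    rw [this, norm_indicator_eq_indicator_norm]
    congr 1
    funext s
    rw [norm_mul, Real.norm_eq_abs, Real.norm_eq_abs, abs_of_nonneg hl0]
  simp only [e0]
  rw [integral_indicator measurableSet_Ici, Measure.restrict_restrict measurableSet_Ici]
  have e1 : Ici (p:ℝ) ∩ Ioi 1 = Ici (p:ℝ) := by
    apply inter_eq_left.mpr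
    intro x hx
    have hx' : (p:ℝ) ≤ x := hx
    have := prime_two_le hp
    exact mem_Ioi.mpr (by linarith)
  rw [e1, integral_Ici_eq_integral_Ioi, integral_const_mul]
  exact mul_le_mul_of_nonneg_left (integral_abs_gg_le hp1) hl0

lemma summable_norm_uu : Summable (fun p : ℕ => ∫ t in Ioi (1:ℝ), ‖uu p t‖) := by
  apply summable_prime_bound (c := 44)
  · intro p hp
    have : ∀ t : ℝ, ‖uu p t‖ = 0 := by intro t; simp [uu, hp]
    simp only [this]
    exact integral_zero _ _
  · intro p hp
    have hp1 : (1:ℝ) ≤ (p:ℝ) := prime_one_le hp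
    have h1 := uu_norm_integral_le hp
    have h2 : 0 ≤ ∫ t in Ioi (1:ℝ), ‖uu p t‖ := integral_nonneg (fun t => norm_nonneg _)
    rw [abs_of_nonneg h2]
    exact le_trans h1 (keybound1 hp1)

lemma uu_tsum {t : ℝ} (ht : t ∈ Ioi (1:ℝ)) : ∑' p, uu p t = chebTheta t * gg t := by
  have ht1 : (1:ℝ) < t := ht
  have ht0 : (0:ℝ) ≤ t := by linarith
  rw [tsum_eq_sum (s := (Finset.range (Nat.floor t + 1)).filter Nat.Prime) ?h]
  · rw [chebTheta, Finset.sum_mul]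
    apply Finset.sum_congr rfl
    intro p hp
    rw [Finset.mem_filter, Finset.mem_range] at hp
    obtain ⟨hpr, hprime⟩ := hp
    have hple : (p:ℝ) ≤ t := by
      have : p ≤ Nat.floor t := Nat.lt_succ_iff.mp hpr
      calc (p:ℝ) ≤ (Nat.floor t : ℝ) := by exact_mod_cast this
        _ ≤ t := Nat.floor_le ht0
    rw [uu, if_pos hprime, indicator_of_mem (mem_Ici.mpr hple)]
  · intro p hps
    by_cases hprime : p.Prime
    · rw [uu, if_pos hprime]
      apply indicator_of_notMem
      rw [mem_Ici]
      intro hle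
      apply hps
      rw [Finset.mem_filter, Finset.mem_range]
      refine ⟨Nat.lt_succ_iff.mpr ?_, hprime⟩
      exact Nat.le_floor hle
    · rw [uu, if_neg hprime]

lemma summable_aa : Summable aa := by
  apply summable_prime_bound (c := 24)
  · intro p hp; rw [aa, if_neg hp]
  · intro p hp
    have hp1 : (1:ℝ) ≤ (p:ℝ) := prime_one_le hp
    have hl0 : 0 ≤ Real.log (p:ℝ) := Real.log_nonneg hp1
    have h1 : |aa p| = (Real.log p)^2 * |qq p| := by
      rw [aa, if_pos hp, hh, abs_mul, abs_mul, abs_of_nonneg hl0]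
      ring
    rw [h1]
    have h2 : (Real.log p)^2 * |qq (p:ℝ)| ≤ (Real.log p)^2 * (6 / (p:ℝ)^3) :=
      mul_le_mul_of_nonneg_left (abs_qq_le hp1) (by positivity)
    exact le_trans h2 (keybound2 hp1)

lemma integral_theta_gg_eq : ∫ t in Ioi (1:ℝ), chebTheta t * gg t = -∑' p, aa p := by
  have h := integral_tsum_of_summable_integral_norm uu_integrable summable_norm_uu
  have h1 : ∀ p : ℕ, ∫ t in Ioi (1:ℝ), uu p t = -(aa p) := by
    intro p
    by_cases hp : p.Prime
    · rw [uu_integral hp, aa, if_pos hp]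
    · rw [aa, if_neg hp, neg_zero]
      have : ∀ t : ℝ, uu p t = 0 := fun t => by simp [uu, hp]
      simp only [this]
      exact integral_zero _ _
  have h2 : ∑' p : ℕ, ∫ t in Ioi (1:ℝ), uu p t = -∑' p, aa p := by
    rw [tsum_congr h1, tsum_neg]
  rw [← h2, h]
  symm
  apply setIntegral_congr_fun measurableSet_Ioi
  intro t ht
  exact uu_tsum ht

lemma key_integral : ∫ t in Ioi (1:ℝ), chebE t * gg t = 1/4 - ∑' p, aa p := by
  have h1 : ∀ t : ℝ, chebE t * gg t = chebTheta t * gg t - t * gg t := by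
    intro t; rw [chebE]; ring
  simp only [h1]
  rw [integral_sub integrableOn_theta_gg integrableOn_id_gg,
    integral_theta_gg_eq, integral_Ioi_id_gg]
  ring

end part6
section part7
open Real MeasureTheory Set Filter Topology

lemma qq_nonneg {x : ℝ} (hx : 1 ≤ x) : 0 ≤ qq x := by
  have h0 : (0:ℝ) < x := lt_of_lt_of_le one_pos hx
  rw [qq]
  apply div_nonneg _ (by positivity)
  obtain ⟨a1, a2, _, _⟩ := pow_chain hx
  nlinarith

noncomputable def bb (p : ℕ) : ℝ := if p.Prime then (Real.log p)^4 * qq p else 0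

lemma bb_nonneg (p : ℕ) : 0 ≤ bb p := by
  rw [bb]
  by_cases hp : p.Prime
  · rw [if_pos hp]
    exact mul_nonneg (by positivity) (qq_nonneg (prime_one_le hp))
  · rw [if_neg hp]

lemma summable_bb : Summable bb := by
  apply summable_prime_bound (c := 24576)
  · intro p hp; rw [bb, if_neg hp]
  · intro p hp
    have hp1 : (1:ℝ) ≤ (p:ℝ) := prime_one_le hp
    rw [bb, if_pos hp, abs_of_nonneg (mul_nonneg (by positivity) (qq_nonneg hp1))]
    have h2 : (Real.log p)^4 * qq (p:ℝ) ≤ (Real.log p)^4 * (6 / (p:ℝ)^3) :=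
      mul_le_mul_of_nonneg_left (le_trans (le_abs_self _) (abs_qq_le hp1)) (by positivity)
    exact le_trans h2 (keybound4 hp1)

lemma taylor_bound (ψ : ℝ → ℝ) (heven : ∀ x : ℝ, ψ (-x) = ψ x)
    (hsmooth : ContDiff ℝ (⊤ : ℕ∞) ψ) (hsupp : HasCompactSupport ψ) :
    ∃ K > (0:ℝ), ∀ x : ℝ, |ψ x - ψ 0| ≤ K * x^2 := by
  have hinf : ContDiff ℝ ((⊤:ℕ∞):WithTop ℕ∞) ψ := hsmooth.of_le (by simp)
  have hd1 : ContDiff ℝ ((⊤:ℕ∞):WithTop ℕ∞) (deriv ψ) := (contDiff_infty_iff_deriv.mp hinf).2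
  have hd2cont : Continuous (deriv (deriv ψ)) :=
    ((contDiff_infty_iff_deriv.mp hd1).2).continuous
  have hsupp2 : HasCompactSupport (deriv (deriv ψ)) := hsupp.deriv.deriv
  obtain ⟨Cb, hCb⟩ := hd2cont.bounded_above_of_compact_support hsupp2
  set K : ℝ := max Cb 0 + 1 with hKdef
  have hK0 : (0:ℝ) < K := by
    have : (0:ℝ) ≤ max Cb 0 := le_max_right _ _
    rw [hKdef]; linarith
  have hK : ∀ y : ℝ, ‖deriv (deriv ψ) y‖ ≤ K := by
    intro y
    calc ‖deriv (deriv ψ) y‖ ≤ Cb := hCb y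
      _ ≤ K := by rw [hKdef]; have := le_max_left Cb 0; linarith
  have hodd : deriv ψ 0 = 0 := by
    have h1 : (fun x : ℝ => ψ (-x)) = ψ := funext heven
    have h2 := deriv_comp_neg (f := ψ) (x := (0:ℝ))
    rw [h1, neg_zero] at h2
    linarith
  have hlip : ∀ y : ℝ, ‖deriv ψ y‖ ≤ K * ‖y‖ := by
    intro y
    have h := convex_univ.norm_image_sub_le_of_norm_deriv_le (f := deriv ψ)
      (fun x _ => (hd1.differentiable (by simp)).differentiableAt)
      (fun x _ => hK x) (mem_univ (0:ℝ)) (mem_univ y)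
    rw [hodd, sub_zero, sub_zero] at h
    exact h
  refine ⟨K, hK0, ?_⟩
  intro x
  have hx0 : (0:ℝ) ≤ |x| := abs_nonneg x
  have hsb : ∀ y ∈ Icc (-|x|) |x|, ‖deriv ψ y‖ ≤ K * |x| := by
    intro y hy
    have hyx : |y| ≤ |x| := abs_le.mpr ⟨hy.1, hy.2⟩
    calc ‖deriv ψ y‖ ≤ K * ‖y‖ := hlip y
      _ ≤ K * |x| := by
          rw [Real.norm_eq_abs]
          exact mul_le_mul_of_nonneg_left hyx (le_of_lt hK0)
  have h := (convex_Icc (-|x|) (|x|)).norm_image_sub_le_of_norm_deriv_le (f := ψ)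
    (fun y _ => (hinf.differentiable (by simp)).differentiableAt) hsb
    (mem_Icc.mpr ⟨by linarith, hx0⟩) (mem_Icc.mpr ⟨neg_abs_le x, le_abs_self x⟩)
  rw [sub_zero] at h
  calc |ψ x - ψ 0| ≤ K * |x| * ‖x‖ := h
    _ = K * x^2 := by rw [Real.norm_eq_abs]; rw [mul_assoc, abs_mul_abs_self]; ring

end part7
theorem stmt12 (ψ : ℝ → ℝ) (heven : ∀ x : ℝ, ψ (-x) = ψ x)
    (hsmooth : ContDiff ℝ (⊤ : ℕ∞) ψ) (hsupp : HasCompactSupport ψ) :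
    ∃ C > (0:ℝ), ∃ R₀ > (1:ℝ), ∀ R : ℝ, R₀ ≤ R →
      |(∑' p : ℕ, if Nat.Prime p then
            ((Real.log p)^2 / (Real.log R)^2) * ψ (2 * Real.log p / Real.log R) *
              (((p:ℝ) - 1) * (3*(p:ℝ)^2 + 3*(p:ℝ) + 1) / ((p:ℝ)^3 * ((p:ℝ) + 1)^3))
          else 0)
        - ψ 0 / (4 * (Real.log R)^2)
        + (ψ 0 / (Real.log R)^2) *
            (∫ t in Set.Ioi (1:ℝ), chebE t *
              ((-9*t^4 + 10*t^2 + 10*t + 3) * Real.log t + 3*t^4 + 3*t^3 - 2*t^2 - 3*t - 1)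
                / (t^4 * (t+1)^4))|
      ≤ C / (Real.log R)^4 := by
  classical
  obtain ⟨K, hK0, hKb⟩ := taylor_bound ψ heven hsmooth hsupp
  obtain ⟨M, hM⟩ := hsmooth.continuous.bounded_above_of_compact_support hsupp
  have hM0 : 0 ≤ M := le_trans (norm_nonneg (ψ 0)) (hM 0)
  set B := ∑' p, bb p with hBdef
  have hB0 : 0 ≤ B := tsum_nonneg bb_nonneg
  refine ⟨4*K*B + 1, by positivity, 3, by norm_num, ?_⟩
  intro R hR
  set L := Real.log R with hLdef
  have hL1 : 1 ≤ L := by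
    rw [hLdef]
    have h3 : (1:ℝ) ≤ Real.log 3 := by
      rw [Real.le_log_iff_exp_le (by norm_num)]
      have := Real.exp_one_lt_d9
      linarith
    have := Real.log_le_log (by norm_num : (0:ℝ) < 3) hR
    linarith
  have hL0 : (0:ℝ) < L := by linarith
  have hLne : L ≠ 0 := ne_of_gt hL0
  have hint : (∫ t in Set.Ioi (1:ℝ), chebE t *
      ((-9*t^4 + 10*t^2 + 10*t + 3) * Real.log t + 3*t^4 + 3*t^3 - 2*t^2 - 3*t - 1)
        / (t^4 * (t+1)^4)) = 1/4 - ∑' p, aa p := by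
    rw [← key_integral]
    apply MeasureTheory.setIntegral_congr_fun measurableSet_Ioi
    intro t _
    show chebE t * _ / _ = chebE t * gg t
    rw [gg, mul_div_assoc]
  rw [hint]
  set T : ℕ → ℝ := fun p => if Nat.Prime p then
      (Real.log p)^2 / L^2 * ψ (2 * Real.log p / L) *
        (((p:ℝ) - 1) * (3*(p:ℝ)^2 + 3*(p:ℝ) + 1) / ((p:ℝ)^3 * ((p:ℝ) + 1)^3))
    else 0 with hTdef
  have hL2 : (1:ℝ) ≤ L^2 := by nlinarith
  have hTbound : ∀ p : ℕ, p.Prime → |T p| ≤ (M * 24) * (((p:ℝ)) ^ ((3:ℝ)/2))⁻¹ := by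
    intro p hp
    have hp1 : (1:ℝ) ≤ (p:ℝ) := prime_one_le hp
    have hq0 : 0 ≤ qq (p:ℝ) := qq_nonneg hp1
    have e1 : T p = (Real.log p)^2 / L^2 * ψ (2 * Real.log p / L) * qq (p:ℝ) := by
      simp only [hTdef, if_pos hp]
      rw [qq_eq]
    have s1 : |ψ (2 * Real.log p / L)| ≤ M := by
      rw [← Real.norm_eq_abs]; exact hM _
    have s2 : (Real.log p)^2 / L^2 ≤ (Real.log p)^2 := div_le_self (by positivity) hL2
    have s3 : qq (p:ℝ) ≤ 6 / (p:ℝ)^3 := le_trans (le_abs_self _) (abs_qq_le hp1)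
    have c1 : (0:ℝ) ≤ (Real.log p)^2 / L^2 := by positivity
    calc |T p| = ((Real.log p)^2 / L^2) * |ψ (2 * Real.log p / L)| * qq (p:ℝ) := by
          rw [e1, abs_mul, abs_mul, abs_of_nonneg hq0, abs_of_nonneg c1]
      _ ≤ ((Real.log p)^2 / L^2) * M * qq (p:ℝ) :=
          mul_le_mul_of_nonneg_right (mul_le_mul_of_nonneg_left s1 c1) hq0
      _ ≤ (Real.log p)^2 * M * qq (p:ℝ) :=
          mul_le_mul_of_nonneg_right (mul_le_mul_of_nonneg_right s2 hM0) hq0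
      _ = M * ((Real.log p)^2 * qq (p:ℝ)) := by ring
      _ ≤ M * ((Real.log p)^2 * (6 / (p:ℝ)^3)) :=
          mul_le_mul_of_nonneg_left (mul_le_mul_of_nonneg_left s3 (by positivity)) hM0
      _ ≤ M * (24 * (((p:ℝ)) ^ ((3:ℝ)/2))⁻¹) :=
          mul_le_mul_of_nonneg_left (keybound2 hp1) hM0
      _ = (M * 24) * (((p:ℝ)) ^ ((3:ℝ)/2))⁻¹ := by ring
  have hTsum : Summable T :=
    summable_prime_bound (fun p hp => by simp only [hTdef, if_neg hp]) hTbound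
  have hasum : Summable (fun p => (ψ 0 / L^2) * aa p) := summable_aa.mul_left _
  have hdsum : Summable (fun p => T p - (ψ 0 / L^2) * aa p) := hTsum.sub hasum
  have hsplit : ∑' p, T p
      = (ψ 0 / L^2) * (∑' p, aa p) + ∑' p, (T p - (ψ 0 / L^2) * aa p) := by
    rw [Summable.tsum_sub hTsum hasum, tsum_mul_left]
    ring
  have hdbound : ∀ p : ℕ, |T p - (ψ 0 / L^2) * aa p| ≤ (4*K/L^4) * bb p := by
    intro p
    by_cases hp : p.Prime
    · have hp1 : (1:ℝ) ≤ (p:ℝ) := prime_one_le hp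
      have hq0 : 0 ≤ qq (p:ℝ) := qq_nonneg hp1
      have e1 : T p - (ψ 0 / L^2) * aa p
          = ((Real.log p)^2 * qq (p:ℝ) / L^2) * (ψ (2 * Real.log p / L) - ψ 0) := by
        simp only [hTdef, aa, if_pos hp]
        rw [← qq_eq, hh]
        ring
      have c0 : (0:ℝ) ≤ (Real.log p)^2 * qq (p:ℝ) / L^2 := by positivity
      rw [e1, abs_mul, abs_of_nonneg c0]
      calc ((Real.log p)^2 * qq (p:ℝ) / L^2) * |ψ (2 * Real.log p / L) - ψ 0|
          ≤ ((Real.log p)^2 * qq (p:ℝ) / L^2) * (K * (2 * Real.log p / L)^2) :=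
            mul_le_mul_of_nonneg_left (hKb _) c0
        _ = (4*K/L^4) * ((Real.log p)^4 * qq (p:ℝ)) := by field_simp; ring
        _ = (4*K/L^4) * bb p := by rw [bb, if_pos hp]
    · have e0 : T p = 0 := by simp only [hTdef, if_neg hp]
      have e1 : aa p = 0 := by rw [aa, if_neg hp]
      have e2 : bb p = 0 := by rw [bb, if_neg hp]
      rw [e0, e1, e2]
      simp
  have hnormsum : Summable (fun p => ‖T p - (ψ 0 / L^2) * aa p‖) := by
    simpa only [Real.norm_eq_abs] using hdsum.abs
  have habs : |∑' p, (T p - (ψ 0 / L^2) * aa p)| ≤ (4*K/L^4) * B := by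
    have h1 : |∑' p, (T p - (ψ 0 / L^2) * aa p)| ≤ ∑' p, |T p - (ψ 0 / L^2) * aa p| := by
      simpa only [Real.norm_eq_abs] using norm_tsum_le_tsum_norm hnormsum
    have h2 : ∑' p, |T p - (ψ 0 / L^2) * aa p| ≤ ∑' p, (4*K/L^4) * bb p := by
      apply Summable.tsum_le_tsum hdbound
      · simpa only [Real.norm_eq_abs] using hnormsum
      · exact summable_bb.mul_left _
    have h3 : ∑' p, (4*K/L^4) * bb p = (4*K/L^4) * B := tsum_mul_left
    linarith
  have e4 : (ψ 0 / L^2) * (1/4 - ∑' p, aa p)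
      = ψ 0 / (4 * L^2) - (ψ 0 / L^2) * (∑' p, aa p) := by
    field_simp
  have efinal : (∑' p, T p) - ψ 0 / (4 * L^2) + (ψ 0 / L^2) * (1/4 - ∑' p, aa p)
      = ∑' p, (T p - (ψ 0 / L^2) * aa p) := by
    rw [hsplit, e4]
    ring
  rw [efinal]
  calc |∑' p, (T p - (ψ 0 / L^2) * aa p)| ≤ (4*K/L^4) * B := habs
    _ = (4*K*B) / L^4 := by ring
    _ ≤ (4*K*B + 1) / L^4 := by
        apply div_le_div_of_nonneg_right ?_ (by positivity)
        linarith
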